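/- arXiv:0905.0008 — 4 statements merged into one kernel-verified Lean document; each statement's English description precedes it below -/
import Mathlib

section
/- Let D be (the combinatorial model of) an oriented r-component link diagram with Gauss words W^i and inter-crossing matrix m. Then d(D) + d(-D) + sr(D) ≤ c(D). Moreover, equality holds if and only if D has property C. -/
/-- A Gauss word on `n` labels: each label occurs exactly twice,
once with flag `true` (over-passage) and once with flag `false` (under-passage). -/
def IsGaussWord {n : ℕ} (W : List (Fin n × Bool)) : Prop :=
  ∀ i : Fin n, W.count (i, true) = 1 ∧ W.count (i, false) = 1

/-- Based warping degree: the number of labels whose first occurrence carries flag `false`. -/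
def basedWd {n : ℕ} (W : List (Fin n × Bool)) : ℕ :=
  (Finset.univ.filter fun i : Fin n =>
    W.idxOf (i, false) < W.idxOf (i, true)).card

/-- Warping degree of a Gauss word: minimum of the based warping degree
over all cyclic rotations. -/
noncomputable def wd {n : ℕ} (W : List (Fin n × Bool)) : ℕ :=
  sInf {v | ∃ k : ℕ, v = basedWd (W.rotate k)}

/-- A Gauss word is alternating if the flags of consecutive entries alternate. -/
def IsAlternating {n : ℕ} (W : List (Fin n × Bool)) : Prop :=
  W.Chain' fun x y => y.2 = !x.2

/-- Based linking warping degree for the ordering given by `σ`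
(component `i` precedes `j` when `σ i < σ j`). -/
def ldSigma {r : ℕ} (m : Fin r → Fin r → ℕ) (σ : Equiv.Perm (Fin r)) : ℕ :=
  ∑ p ∈ Finset.univ.filter (fun p : Fin r × Fin r => σ p.1 < σ p.2), m p.1 p.2

/-- Linking warping degree: minimum over all orderings. -/
noncomputable def linkLd {r : ℕ} (m : Fin r → Fin r → ℕ) : ℕ :=
  sInf {v | ∃ σ : Equiv.Perm (Fin r), v = ldSigma m σ}

/-- Linking crossing number: number of non-self crossings. -/
def lcNum {r : ℕ} (m : Fin r → Fin r → ℕ) : ℕ :=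
  ∑ p ∈ Finset.univ.filter (fun p : Fin r × Fin r => p.1 ≠ p.2), m p.1 p.2

/-- Warping degree of an ordered link diagram: minimum over all orderings `σ`
and all choices of cyclic rotations (base points) of the components. -/
noncomputable def linkWd {r : ℕ} {n : Fin r → ℕ} (W : ∀ i, List (Fin (n i) × Bool))
    (m : Fin r → Fin r → ℕ) : ℕ :=
  sInf {v | ∃ (σ : Equiv.Perm (Fin r)) (k : Fin r → ℕ),
    v = (∑ i, basedWd ((W i).rotate (k i))) + ldSigma m σ}

/-- Crossing number of the link diagram. -/
def crossingNum {r : ℕ} (n : Fin r → ℕ) (m : Fin r → Fin r → ℕ) : ℕ :=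
  (∑ i, n i) + ∑ p ∈ Finset.univ.filter (fun p : Fin r × Fin r => p.1 < p.2),
    (m p.1 p.2 + m p.2 p.1)

/-- The number of components having at least one self-crossing. -/
def srNum {r : ℕ} (n : Fin r → ℕ) : ℕ :=
  (Finset.univ.filter fun i : Fin r => 1 ≤ n i).card

/-- Property C: every component word is alternating and, for each pair of distinct
components, the number of over-crossings equals the number of under-crossings. -/
def PropertyC {r : ℕ} {n : Fin r → ℕ} (W : ∀ i, List (Fin (n i) × Bool))
    (m : Fin r → Fin r → ℕ) : Prop :=
  (∀ i, IsAlternating (W i)) ∧ ∀ i j : Fin r, i ≠ j → m i j = m j i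

/-!
Moving the base point of a Gauss word past one crossing moves that crossing from the front of
the word to the back, which changes the based warping degree by `+1` at an over-passage and by
`-1` at an under-passage; reversing a word sends the based warping degree `b` to `n - b`. Hence
`d(W) + d(-W) = n - (max - min)`, the extrema being taken over all base points. For `n ≥ 1` two
consecutive base points already differ by one, so `max - min ≥ 1`, and `max - min = 1` exactly
when the flags alternate (two equal consecutive flags give a jump by two).

For the linking part, reversing the order `σ` swaps the pairs that are counted, so
`ld_σ + ld_{rev σ} = lc` and `2 ld ≤ lc`, with equality when `m` is symmetric. Conversely,
equality makes every order optimal; comparing an order putting `i, j` in the first two places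
with the same order with `i, j` exchanged gives `m i j = m j i`. Finally `d(D)` splits as the sum
of the component warping degrees plus `ld(D)`, since the choices of base points and of the order
are independent.
-/

open Finset

theorem List.idxOf_reverse {α : Type*} [BEq α] [LawfulBEq α] {l : List α} (hl : l.Nodup)
    {a : α} (ha : a ∈ l) : l.reverse.idxOf a = l.length - 1 - l.idxOf a := by
  have hlt : l.idxOf a < l.length := List.idxOf_lt_length_of_mem ha
  have hrev : l.reverse[l.length - 1 - l.idxOf a]'(by simp; omega) = a := by
    rw [List.getElem_reverse]
    simp only [show l.length - 1 - (l.length - 1 - l.idxOf a) = l.idxOf a by omega,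
      List.getElem_idxOf]
  conv_lhs => rw [← hrev]
  exact List.get_idxOf (List.nodup_reverse.2 hl) ⟨_, _⟩

theorem Finset.card_filter_add_ite_eq {α : Type*} [Fintype α] [DecidableEq α]
    {P Q : α → Prop} [DecidablePred P] [DecidablePred Q] (a : α) (h : ∀ x ≠ a, P x ↔ Q x) :
    #{x | P x} + (if Q a then 1 else 0) = #{x | Q x} + (if P a then 1 else 0) := by
  simp only [card_filter, ← add_sum_erase _ _ (mem_univ a)]
  rw [sum_congr rfl fun x hx => if_congr (h x (ne_of_mem_erase hx)) rfl rfl]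
  ring

theorem Equiv.Perm.exists_apply_eq_and_apply_eq {α : Type*} [DecidableEq α] {i j a b : α}
    (hij : i ≠ j) (hab : a ≠ b) : ∃ σ : Equiv.Perm α, σ i = a ∧ σ j = b := by
  have ha : a ≠ Equiv.swap i a j := by
    simpa only [Equiv.swap_apply_left] using (Equiv.swap i a).injective.ne hij
  exact ⟨(Equiv.swap i a).trans (Equiv.swap (Equiv.swap i a j) b),
    by simp [Equiv.swap_apply_of_ne_of_ne ha hab], by simp⟩

section GaussWords

variable {n : ℕ}

theorem isAlternating_iff_getElem {W : List (Fin n × Bool)} :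
    IsAlternating W ↔ ∀ i (hi : i + 1 < W.length), W[i + 1].2 = !W[i].2 :=
  List.isChain_iff_getElem

theorem basedWd_le (W : List (Fin n × Bool)) : basedWd W ≤ n :=
  (card_filter_le _ _).trans_eq (card_fin n)

theorem wd_le_basedWd_rotate (W : List (Fin n × Bool)) (k : ℕ) :
    wd W ≤ basedWd (W.rotate k) :=
  Nat.sInf_le ⟨k, rfl⟩

theorem exists_wd_eq_basedWd_rotate (W : List (Fin n × Bool)) :
    ∃ k, wd W = basedWd (W.rotate k) :=
  Nat.sInf_mem (s := {v | ∃ k : ℕ, v = basedWd (W.rotate k)}) ⟨_, 0, rfl⟩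

end GaussWords

namespace IsGaussWord

variable {n : ℕ} {W : List (Fin n × Bool)}

theorem count_eq_one (hW : IsGaussWord W) (x : Fin n × Bool) : W.count x = 1 := by
  obtain ⟨i, _ | _⟩ := x
  exacts [(hW i).2, (hW i).1]

theorem mem (hW : IsGaussWord W) (x : Fin n × Bool) : x ∈ W :=
  List.count_pos_iff.1 (by rw [hW.count_eq_one x]; exact one_pos)

theorem nodup (hW : IsGaussWord W) : W.Nodup :=
  List.nodup_iff_count_le_one.2 fun x => (hW.count_eq_one x).le

theorem rotate (hW : IsGaussWord W) (k : ℕ) : IsGaussWord (W.rotate k) := by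
  intro i
  simp only [(List.rotate_perm W k).count_eq]
  exact hW i

theorem basedWd_reverse (hW : IsGaussWord W) : basedWd W.reverse = n - basedWd W := by
  have hflip : ∀ i : Fin n, W.reverse.idxOf (i, false) < W.reverse.idxOf (i, true) ↔
      ¬ W.idxOf (i, false) < W.idxOf (i, true) := by
    intro i
    have hne : W.idxOf (i, false) ≠ W.idxOf (i, true) := fun h => by
      simpa using (List.idxOf_inj (hW.mem _)).1 h
    have := List.idxOf_lt_length_of_mem (hW.mem (i, false))
    have := List.idxOf_lt_length_of_mem (hW.mem (i, true))
    rw [List.idxOf_reverse hW.nodup (hW.mem _), List.idxOf_reverse hW.nodup (hW.mem _)]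
    omega
  unfold basedWd
  rw [filter_congr fun i _ => hflip i, filter_not, card_sdiff_of_subset (filter_subset _ _)]
  simp

theorem basedWd_append_singleton {i₀ : Fin n} {b : Bool} {t : List (Fin n × Bool)}
    (hW : IsGaussWord ((i₀, b) :: t)) :
    (basedWd (t ++ [(i₀, b)]) : ℤ) = basedWd ((i₀, b) :: t) + if b then 1 else -1 := by
  have hmem : ∀ y ≠ (i₀, b), y ∈ t := fun y hy => (List.mem_cons.1 (hW.mem y)).resolve_left hy
  have hnot : (i₀, b) ∉ t := by
    have := hW.count_eq_one (i₀, b)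
    rw [List.count_cons_self, add_eq_right] at this
    exact List.count_eq_zero.1 this
  have hlt : t.idxOf (i₀, !b) < t.length := List.idxOf_lt_length_of_mem (hmem _ (by simp))
  have hcons : ((i₀, b) :: t).idxOf (i₀, !b) = t.idxOf (i₀, !b) + 1 :=
    List.idxOf_cons_ne _ (by simp)
  have happ : (t ++ [(i₀, b)]).idxOf (i₀, !b) = t.idxOf (i₀, !b) :=
    List.idxOf_append_of_mem (hmem _ (by simp))
  have happ' : (t ++ [(i₀, b)]).idxOf (i₀, b) = t.length := by
    simp [List.idxOf_append_of_notMem hnot]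
  have hP : ((i₀, b) :: t).idxOf (i₀, false) < ((i₀, b) :: t).idxOf (i₀, true) ↔ b = false := by
    cases b <;> simp only [Bool.not_false, Bool.not_true] at hcons <;> simp [hcons]
  have hQ : (t ++ [(i₀, b)]).idxOf (i₀, false) < (t ++ [(i₀, b)]).idxOf (i₀, true) ↔
      b = true := by
    cases b <;> simp only [Bool.not_false, Bool.not_true] at happ hlt <;>
      simp [happ, happ', hlt, hlt.le]
  have hcard := card_filter_add_ite_eq (P := fun i =>
      ((i₀, b) :: t).idxOf (i, false) < ((i₀, b) :: t).idxOf (i, true))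
    (Q := fun i => (t ++ [(i₀, b)]).idxOf (i, false) < (t ++ [(i₀, b)]).idxOf (i, true))
    i₀ fun i hi => by
      have hi' : ∀ c, (i, c) ≠ (i₀, b) := by simp [hi]
      simp only [List.idxOf_cons_ne _ (hi' _).symm, List.idxOf_append_of_mem (hmem _ (hi' _))]
      omega
  simp only [hP, hQ] at hcard
  unfold basedWd
  cases b <;> simp at hcard ⊢ <;> omega

theorem basedWd_rotate_succ (hW : IsGaussWord W) {k : ℕ} (hk : k < W.length) :
    (basedWd (W.rotate (k + 1)) : ℤ) = basedWd (W.rotate k) + if W[k].2 then 1 else -1 := by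
  have hrot : W.rotate k = W[k] :: (W.drop (k + 1) ++ W.take k) := by
    rw [List.rotate_eq_drop_append_take hk.le, List.drop_eq_getElem_cons hk, List.cons_append]
  rw [← List.rotate_rotate, hrot, List.rotate_cons_succ, List.rotate_zero]
  exact basedWd_append_singleton (hrot ▸ hW.rotate k)

theorem basedWd_rotate_one_eq_or (hW : IsGaussWord W) (hpos : 0 < W.length) :
    basedWd (W.rotate 1) = basedWd (W.rotate 0) + 1 ∨
      basedWd (W.rotate 0) = basedWd (W.rotate 1) + 1 := by
  have := hW.basedWd_rotate_succ hpos
  rw [zero_add] at this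
  split_ifs at this <;> omega

theorem basedWd_rotate_add_two (hW : IsGaussWord W) (hA : IsAlternating W) {k : ℕ}
    (hk : k + 2 ≤ W.length) : basedWd (W.rotate (k + 2)) = basedWd (W.rotate k) := by
  show basedWd (W.rotate (k + 1 + 1)) = _
  have h₁ := hW.basedWd_rotate_succ (k := k) (by omega)
  have h₂ := hW.basedWd_rotate_succ (k := k + 1) (by omega)
  rw [isAlternating_iff_getElem.1 hA k (by omega)] at h₂
  cases h : W[k].2 <;>
    simp only [h, Bool.not_true, Bool.not_false, if_true, if_false, Bool.false_eq_true] at h₁ h₂ <;>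
    omega

theorem basedWd_rotate_eq_or_eq (hW : IsGaussWord W) (hA : IsAlternating W) (k : ℕ) :
    basedWd (W.rotate k) = basedWd (W.rotate 0) ∨ basedWd (W.rotate k) = basedWd (W.rotate 1) := by
  obtain hnil | hpos := W.length.eq_zero_or_pos
  · simp [List.length_eq_zero_iff.1 hnil]
  have hmod_two : ∀ k ≤ W.length, basedWd (W.rotate k) = basedWd (W.rotate (k % 2)) := by
    intro k
    induction k using Nat.strong_induction_on with
    | _ k ih =>
      rcases k with _ | _ | k
      · intro _; rfl
      · intro _; rfl
      · intro hk
        rw [hW.basedWd_rotate_add_two hA hk, ih k (by omega) (by omega),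
          show (k + 1 + 1) % 2 = k % 2 by omega]
  rw [← List.rotate_mod, hmod_two _ (Nat.mod_lt _ hpos).le]
  rcases Nat.mod_two_eq_zero_or_one (k % W.length) with h | h <;> simp [h]

theorem isAlternating_iff (hW : IsGaussWord W) :
    IsAlternating W ↔ ∀ j k, basedWd (W.rotate j) ≤ basedWd (W.rotate k) + 1 := by
  constructor
  · intro hA j k
    obtain hnil | hpos := W.length.eq_zero_or_pos
    · simp [List.length_eq_zero_iff.1 hnil]
    have := hW.basedWd_rotate_one_eq_or hpos
    rcases hW.basedWd_rotate_eq_or_eq hA j with hj | hj <;>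
      rcases hW.basedWd_rotate_eq_or_eq hA k with hk | hk <;> omega
  · intro hclose
    refine isAlternating_iff_getElem.2 fun i hi => ?_
    by_contra hflag
    have h₁ := hW.basedWd_rotate_succ (k := i) (by omega)
    have h₂ := hW.basedWd_rotate_succ (k := i + 1) hi
    have := hclose i (i + 1 + 1)
    have := hclose (i + 1 + 1) i
    cases h : W[i].2 <;> cases h' : W[i + 1].2 <;>
      simp only [h, h', Bool.not_true, Bool.not_false, if_true, if_false, Bool.false_eq_true,
        not_true_eq_false] at h₁ h₂ hflag <;> omega

theorem exists_wd_reverse_eq (hW : IsGaussWord W) :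
    ∃ k, wd W.reverse = n - basedWd (W.rotate k) ∧
      ∀ j, basedWd (W.rotate j) ≤ basedWd (W.rotate k) := by
  have hrev : ∀ j, basedWd ((W.rotate j).reverse) = n - basedWd (W.rotate j) :=
    fun j => (hW.rotate j).basedWd_reverse
  obtain ⟨j, hj⟩ := exists_wd_eq_basedWd_rotate W.reverse
  rw [List.rotate_reverse] at hj
  refine ⟨_, hj.trans (hrev _), fun k => ?_⟩
  have hle := wd_le_basedWd_rotate W.reverse (W.length - k % W.length)
  rw [← List.reverse_rotate, hrev, hj, hrev] at hle
  have := basedWd_le (W.rotate k)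
  omega

theorem wd_add_wd_reverse_add_le_and_eq_iff (hW : IsGaussWord W) :
    wd W + wd W.reverse + (if 1 ≤ n then 1 else 0) ≤ n ∧
      (wd W + wd W.reverse + (if 1 ≤ n then 1 else 0) = n ↔ IsAlternating W) := by
  obtain ⟨k₀, hk₀⟩ := exists_wd_eq_basedWd_rotate W
  obtain ⟨k₁, hk₁, hmax⟩ := hW.exists_wd_reverse_eq
  have hmin : ∀ k, basedWd (W.rotate k₀) ≤ basedWd (W.rotate k) :=
    fun k => hk₀ ▸ wd_le_basedWd_rotate W k
  have := basedWd_le (W.rotate k₁)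
  rw [hW.isAlternating_iff, hk₀, hk₁]
  split_ifs with hn
  · have hspread := hW.basedWd_rotate_one_eq_or
      (List.length_pos_of_mem (hW.mem (⟨0, hn⟩, true)))
    have := hmin 0
    have := hmin 1
    have := hmax 0
    have := hmax 1
    refine ⟨by omega, fun h j k => ?_, fun h => ?_⟩
    · have := hmin k
      have := hmax j
      omega
    · have := h k₁ k₀
      omega
  · obtain rfl : n = 0 := by omega
    simp [fun k => Nat.le_zero.1 (basedWd_le (W.rotate k))]

end IsGaussWord

section Linking

variable {r : ℕ}

theorem ldSigma_transpose (m : Fin r → Fin r → ℕ) (σ : Equiv.Perm (Fin r)) :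
    ldSigma (fun i j => m j i) σ = ∑ p ∈ univ.filter (fun p : Fin r × Fin r => σ p.2 < σ p.1),
      m p.1 p.2 :=
  sum_equiv (Equiv.prodComm _ _) (by simp) (by simp)

theorem ldSigma_trans_revPerm (m : Fin r → Fin r → ℕ) (σ : Equiv.Perm (Fin r)) :
    ldSigma m (σ.trans Fin.revPerm) = ldSigma (fun i j => m j i) σ := by
  rw [ldSigma_transpose m σ]
  simp only [ldSigma, Equiv.trans_apply, Fin.revPerm_apply, Fin.rev_lt_rev]

theorem ldSigma_add_ldSigma_transpose (m : Fin r → Fin r → ℕ) (σ : Equiv.Perm (Fin r)) :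
    ldSigma m σ + ldSigma (fun i j => m j i) σ = lcNum m := by
  rw [ldSigma_transpose m σ, ldSigma, lcNum, sum_filter, sum_filter, sum_filter,
    ← sum_add_distrib]
  refine sum_congr rfl fun p _ => ?_
  by_cases hp : p.1 = p.2
  · simp [hp]
  · rcases lt_or_gt_of_ne (σ.injective.ne hp) with h | h <;> simp [h, h.not_gt, hp]

theorem ldSigma_transpose_eq_of_symm {m : Fin r → Fin r → ℕ}
    (hsym : ∀ i j, i ≠ j → m i j = m j i) (σ : Equiv.Perm (Fin r)) :
    ldSigma (fun i j => m j i) σ = ldSigma m σ :=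
  sum_congr rfl fun p hp => hsym _ _ fun h => by simp [h] at hp

theorem ldSigma_sub_ldSigma_swap {m : Fin r → Fin r → ℕ} {σ : Equiv.Perm (Fin r)} {i j : Fin r}
    (hi : (σ i : ℕ) = 0) (hj : (σ j : ℕ) = 1) :
    (ldSigma m σ : ℤ) - ldSigma m ((Equiv.swap i j).trans σ) = m i j - m j i := by
  set τ := (Equiv.swap i j).trans σ with hτ
  have hij : i ≠ j := fun h => by rw [h] at hi; omega
  have hτi : (τ i : ℕ) = 1 := by simp [hτ, hj]
  have hτj : (τ j : ℕ) = 0 := by simp [hτ, hi]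
  have hval : ∀ x, (x = i ∧ (σ x : ℕ) = 0 ∧ (τ x : ℕ) = 1) ∨
      (x = j ∧ (σ x : ℕ) = 1 ∧ (τ x : ℕ) = 0) ∨ (2 ≤ (σ x : ℕ) ∧ τ x = σ x) := by
    intro x
    by_cases hxi : x = i
    · exact .inl ⟨hxi, hxi ▸ hi, hxi ▸ hτi⟩
    by_cases hxj : x = j
    · exact .inr (.inl ⟨hxj, hxj ▸ hj, hxj ▸ hτj⟩)
    have h₁ := Fin.val_ne_of_ne (σ.injective.ne hxi)
    have h₂ := Fin.val_ne_of_ne (σ.injective.ne hxj)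
    exact .inr (.inr ⟨by omega, by simp [hτ, Equiv.swap_apply_of_ne_of_ne hxi hxj]⟩)
  have hsame : ∀ p : Fin r × Fin r, p ≠ (i, j) → p ≠ (j, i) →
      (τ p.1 < τ p.2 ↔ σ p.1 < σ p.2) := by
    rintro ⟨x, y⟩ hp hp'
    rcases hval x with ⟨rfl, hx, hx'⟩ | ⟨rfl, hx, hx'⟩ | ⟨hx, hx'⟩ <;>
    rcases hval y with ⟨rfl, hy, hy'⟩ | ⟨rfl, hy, hy'⟩ | ⟨hy, hy'⟩ <;>
    simp only [Fin.lt_def, hx, hx', hy, hy', ne_eq, not_true_eq_false] at hp hp' ⊢ <;> omega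
  simp only [ldSigma, sum_filter]
  push_cast
  rw [← sum_sub_distrib, Fintype.sum_eq_add (i, j) (j, i) (by simp [hij])]
  · simp [Fin.lt_def, hi, hj, hτi, hτj, sub_eq_add_neg]
  · rintro p ⟨hp, hp'⟩
    simp [hsame p hp hp']

theorem linkLd_le_ldSigma (m : Fin r → Fin r → ℕ) (σ : Equiv.Perm (Fin r)) :
    linkLd m ≤ ldSigma m σ :=
  Nat.sInf_le ⟨σ, rfl⟩

theorem exists_linkLd_eq_ldSigma (m : Fin r → Fin r → ℕ) : ∃ σ, linkLd m = ldSigma m σ :=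
  Nat.sInf_mem (s := {v | ∃ σ : Equiv.Perm (Fin r), v = ldSigma m σ}) ⟨_, 1, rfl⟩

theorem two_mul_linkLd_le (m : Fin r → Fin r → ℕ) : 2 * linkLd m ≤ lcNum m := by
  have h := ldSigma_add_ldSigma_transpose m 1
  rw [← ldSigma_trans_revPerm m 1] at h
  have := linkLd_le_ldSigma m 1
  have := linkLd_le_ldSigma m ((1 : Equiv.Perm (Fin r)).trans Fin.revPerm)
  omega

theorem two_mul_linkLd_eq_iff (m : Fin r → Fin r → ℕ) :
    2 * linkLd m = lcNum m ↔ ∀ i j, i ≠ j → m i j = m j i := by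
  constructor
  · intro h i j hij
    have hopt : ∀ σ, ldSigma m σ = linkLd m := fun σ => by
      have := ldSigma_add_ldSigma_transpose m σ
      rw [← ldSigma_trans_revPerm m σ] at this
      have := linkLd_le_ldSigma m σ
      have := linkLd_le_ldSigma m (σ.trans Fin.revPerm)
      omega
    have hr : 1 < r := by
      have := Fin.val_ne_of_ne hij
      omega
    obtain ⟨σ, hσi, hσj⟩ := Equiv.Perm.exists_apply_eq_and_apply_eq hij
      (a := ⟨0, by omega⟩) (b := ⟨1, hr⟩) (by simp [Fin.ext_iff])
    have := ldSigma_sub_ldSigma_swap (m := m) (congrArg Fin.val hσi) (congrArg Fin.val hσj)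
    rw [hopt, hopt] at this
    omega
  · intro hsym
    obtain ⟨σ, hσ⟩ := exists_linkLd_eq_ldSigma m
    rw [← ldSigma_add_ldSigma_transpose m σ, ldSigma_transpose_eq_of_symm hsym, hσ, two_mul]

theorem crossingNum_eq (n : Fin r → ℕ) (m : Fin r → Fin r → ℕ) :
    crossingNum n m = ∑ i, n i + lcNum m := by
  rw [← ldSigma_add_ldSigma_transpose m 1, ldSigma, ldSigma, ← sum_add_distrib]
  rfl

theorem linkWd_eq {n : Fin r → ℕ} (W : ∀ i, List (Fin (n i) × Bool)) (m : Fin r → Fin r → ℕ) :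
    linkWd W m = ∑ i, wd (W i) + linkLd m := by
  apply le_antisymm
  · choose k hk using fun i => exists_wd_eq_basedWd_rotate (W i)
    obtain ⟨σ, hσ⟩ := exists_linkLd_eq_ldSigma m
    exact Nat.sInf_le ⟨σ, k, by simp only [hk, hσ]⟩
  · refine le_csInf ⟨_, 1, fun _ => 0, rfl⟩ ?_
    rintro v ⟨σ, k, rfl⟩
    exact add_le_add (sum_le_sum fun i _ => wd_le_basedWd_rotate _ _) (linkLd_le_ldSigma m σ)

end Linking

theorem warping_degree_sum_link_general (r : ℕ) (n : Fin r → ℕ)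
    (W : ∀ i, List (Fin (n i) × Bool)) (m : Fin r → Fin r → ℕ)
    (hW : ∀ i, IsGaussWord (W i)) :
    linkWd W m + linkWd (fun i => (W i).reverse) m + srNum n ≤ crossingNum n m ∧
    (linkWd W m + linkWd (fun i => (W i).reverse) m + srNum n = crossingNum n m ↔
      PropertyC W m) := by
  have hcomp := fun i => (hW i).wd_add_wd_reverse_add_le_and_eq_iff
  have hsum : linkWd W m + linkWd (fun i => (W i).reverse) m + srNum n =
      ∑ i, (wd (W i) + wd (W i).reverse + if 1 ≤ n i then 1 else 0) + 2 * linkLd m := by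
    rw [linkWd_eq, linkWd_eq, srNum, card_filter, sum_add_distrib, sum_add_distrib]
    ring
  have hwords := sum_le_sum fun i (_ : i ∈ univ) => (hcomp i).1
  have hlink := two_mul_linkLd_le m
  rw [hsum, crossingNum_eq, PropertyC, ← two_mul_linkLd_eq_iff]
  refine ⟨add_le_add hwords hlink, ?_⟩
  rw [add_eq_add_iff_eq_and_eq hwords hlink, sum_eq_sum_iff_of_le fun i _ => (hcomp i).1]
  simp [(hcomp _).2]

/-- `d(D) + d(-D) + sr(D) ≤ c(D)`, with equality iff `D` has property C. -/
theorem warping_degree_sum_link (r : ℕ) (n : Fin r → ℕ)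
    (W : ∀ i, List (Fin (n i) × Bool)) (m : Fin r → Fin r → ℕ)
    (hW : ∀ i, IsGaussWord (W i)) (hm : ∀ i, m i i = 0) :
    linkWd W m + linkWd (fun i => (W i).reverse) m + srNum n ≤ crossingNum n m ∧
    (linkWd W m + linkWd (fun i => (W i).reverse) m + srNum n = crossingNum n m ↔
      PropertyC W m) :=
  warping_degree_sum_link_general r n W m hW
end

section
/- The value d(D) + d(-D) does not depend on the orientation of D: for any subset S ⊆ Fin r, let D_S be the diagram obtained from D by replacing W^i by its reverse for each i ∈ S (with m unchanged); then d(D_S) + d(-D_S) = d(D) + d(-D). -/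
/-!
Base points and the ordering of the components are chosen independently, so `d(D)` splits as
`Σ i, d(W^i) + ld(D)`. Reorienting component `i` only swaps the two summands `d(W^i)` and
`d(-W^i)` of `d(D) + d(-D)`, and `ld(D)` does not involve the orientations at all.
-/

theorem linkWd_eq_sum_wd_add_linkLd {r : ℕ} {n : Fin r → ℕ} (W : ∀ i, List (Fin (n i) × Bool))
    (m : Fin r → Fin r → ℕ) : linkWd W m = (∑ i, wd (W i)) + linkLd m := by
  apply le_antisymm
  · have hwd (i : Fin r) : wd (W i) ∈ {v | ∃ k : ℕ, v = basedWd ((W i).rotate k)} :=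
      Nat.sInf_mem ⟨_, 0, rfl⟩
    choose k hk using hwd
    obtain ⟨σ, hσ⟩ : linkLd m ∈ {v | ∃ σ : Equiv.Perm (Fin r), v = ldSigma m σ} :=
      Nat.sInf_mem ⟨_, 1, rfl⟩
    exact Nat.sInf_le ⟨σ, k, by rw [hσ, Finset.sum_congr rfl fun i _ => hk i]⟩
  · refine le_csInf ⟨_, 1, fun _ => 0, rfl⟩ ?_
    rintro v ⟨σ, k, rfl⟩
    exact add_le_add (Finset.sum_le_sum fun i _ => Nat.sInf_le ⟨k i, rfl⟩) (Nat.sInf_le ⟨σ, rfl⟩)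

theorem warping_degree_sum_orientation_independent_general (r : ℕ) (n : Fin r → ℕ)
    (W : ∀ i, List (Fin (n i) × Bool)) (m : Fin r → Fin r → ℕ)
    (S : Finset (Fin r)) :
    linkWd (fun i => if i ∈ S then (W i).reverse else W i) m +
      linkWd (fun i => (if i ∈ S then (W i).reverse else W i).reverse) m =
    linkWd W m + linkWd (fun i => (W i).reverse) m := by
  have hcomponent (i : Fin r) :
      wd (if i ∈ S then (W i).reverse else W i) +
        wd (if i ∈ S then (W i).reverse else W i).reverse = wd (W i) + wd (W i).reverse := by
    split_ifs
    · rw [List.reverse_reverse, add_comm]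
    · rfl
  have hsum := Finset.sum_congr rfl fun i (_ : i ∈ Finset.univ) => hcomponent i
  rw [Finset.sum_add_distrib, Finset.sum_add_distrib] at hsum
  simp only [linkWd_eq_sum_wd_add_linkLd]
  omega

/-- `d(D) + d(-D)` does not depend on the orientation of `D`. -/
theorem warping_degree_sum_orientation_independent (r : ℕ) (n : Fin r → ℕ)
    (W : ∀ i, List (Fin (n i) × Bool)) (m : Fin r → Fin r → ℕ)
    (hW : ∀ i, IsGaussWord (W i)) (hm : ∀ i, m i i = 0) (S : Finset (Fin r)) :
    linkWd (fun i => if i ∈ S then (W i).reverse else W i) m +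
      linkWd (fun i => (if i ∈ S then (W i).reverse else W i).reverse) m =
    linkWd W m + linkWd (fun i => (W i).reverse) m :=
  warping_degree_sum_orientation_independent_general r n W m S
end

section
/- For an r-component link diagram D, let d(|D|) be the minimum of d(D_S) over all subsets S ⊆ Fin r, where D_S is obtained from D by replacing W^i by its reverse for each i ∈ S (all orientations of D). Then 2 · d(|D|) ≤ c(D). -/
/-!
Compare `D`, with the identity ordering, and its total reverse `-D`, with the reversed ordering,
both read from the original base points. Reversing a Gauss word swaps which occurrence of each
label comes first, so the based warping degrees of a word and of its reverse add up to its number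
of crossings. For components `i < j`, the identity ordering counts the crossings where `i` passes
under `j` and the reversed ordering those where `j` passes under `i`. So the two values sum to
`c(D)`, and both bound `d(|D|)`.
-/

namespace List

variable {α : Type*} [BEq α] [LawfulBEq α]

theorem idxOf_reverse_of_count_eq_one {x : α} {l : List α} (hx : l.count x = 1) :
    l.reverse.idxOf x = l.length - 1 - l.idxOf x := by
  obtain ⟨s, t, rfl⟩ := append_of_mem (count_pos_iff.mp (by omega : 0 < l.count x))
  obtain ⟨hs, ht⟩ : x ∉ s ∧ x ∉ t := by
    simp only [← count_eq_zero]
    simp only [count_append, count_cons_self] at hx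
    omega
  rw [idxOf_append_of_notMem hs, idxOf_cons_self, reverse_append, reverse_cons, append_assoc,
    idxOf_append_of_notMem (by simpa using ht), singleton_append, idxOf_cons_self]
  simp

theorem idxOf_reverse_lt_idxOf_reverse_iff {x y : α} {l : List α} (hx : l.count x = 1)
    (hy : l.count y = 1) (hxy : x ≠ y) :
    l.reverse.idxOf x < l.reverse.idxOf y ↔ ¬ l.idxOf x < l.idxOf y := by
  have hxl : l.idxOf x < l.length := idxOf_lt_length_iff.mpr (count_pos_iff.mp (by omega))
  have hyl : l.idxOf y < l.length := idxOf_lt_length_iff.mpr (count_pos_iff.mp (by omega))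
  have hne : l.idxOf x ≠ l.idxOf y := (idxOf_inj (count_pos_iff.mp (by omega))).not.mpr hxy
  rw [idxOf_reverse_of_count_eq_one hx, idxOf_reverse_of_count_eq_one hy]
  omega

end List

theorem basedWd_add_basedWd_reverse {n : ℕ} {W : List (Fin n × Bool)} (hW : IsGaussWord W) :
    basedWd W + basedWd W.reverse = n := by
  have hflip (i : Fin n) : W.reverse.idxOf (i, false) < W.reverse.idxOf (i, true) ↔
      ¬ W.idxOf (i, false) < W.idxOf (i, true) :=
    List.idxOf_reverse_lt_idxOf_reverse_iff (hW i).2 (hW i).1 (by simp)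
  unfold basedWd
  simp only [hflip]
  simpa using Finset.card_filter_add_card_filter_not (s := Finset.univ)
    (fun i : Fin n => W.idxOf (i, false) < W.idxOf (i, true))

theorem ldSigma_one_add_ldSigma_revPerm {r : ℕ} (m : Fin r → Fin r → ℕ) :
    ldSigma m 1 + ldSigma m Fin.revPerm =
      ∑ p ∈ Finset.univ.filter (fun p : Fin r × Fin r => p.1 < p.2),
        (m p.1 p.2 + m p.2 p.1) := by
  have hrev : ldSigma m Fin.revPerm =
      ∑ p ∈ Finset.univ.filter (fun p : Fin r × Fin r => p.1 < p.2), m p.2 p.1 :=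
    Finset.sum_equiv (Equiv.prodComm _ _) (by simp [Fin.rev_lt_rev]) (by simp)
  rw [hrev, Finset.sum_add_distrib]
  rfl

theorem linkWd_le_sum_basedWd_add_ldSigma {r : ℕ} {n : Fin r → ℕ}
    (W : ∀ i, List (Fin (n i) × Bool)) (m : Fin r → Fin r → ℕ) (σ : Equiv.Perm (Fin r)) :
    linkWd W m ≤ (∑ i, basedWd (W i)) + ldSigma m σ :=
  Nat.sInf_le ⟨σ, fun _ => 0, by simp⟩

theorem sInf_linkWd_orientations_le {r : ℕ} {n : Fin r → ℕ}
    (W : ∀ i, List (Fin (n i) × Bool)) (m : Fin r → Fin r → ℕ) (S : Finset (Fin r)) :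
    sInf {v | ∃ S : Finset (Fin r),
        v = linkWd (fun i => if i ∈ S then (W i).reverse else W i) m} ≤
      linkWd (fun i => if i ∈ S then (W i).reverse else W i) m :=
  Nat.sInf_le ⟨S, rfl⟩

theorem two_unoriented_wd_le_crossingNum_general (r : ℕ) (n : Fin r → ℕ)
    (W : ∀ i, List (Fin (n i) × Bool)) (m : Fin r → Fin r → ℕ)
    (hW : ∀ i, IsGaussWord (W i)) :
    2 * sInf {v | ∃ S : Finset (Fin r),
        v = linkWd (fun i => if i ∈ S then (W i).reverse else W i) m} ≤
      crossingNum n m := by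
  set dUnoriented := sInf {v | ∃ S : Finset (Fin r),
      v = linkWd (fun i => if i ∈ S then (W i).reverse else W i) m}
  have hD : dUnoriented ≤ (∑ i, basedWd (W i)) + ldSigma m 1 := by
    refine (sInf_linkWd_orientations_le W m ∅).trans ?_
    simpa using linkWd_le_sum_basedWd_add_ldSigma W m 1
  have hDrev : dUnoriented ≤ (∑ i, basedWd (W i).reverse) + ldSigma m Fin.revPerm := by
    refine (sInf_linkWd_orientations_le W m Finset.univ).trans ?_
    simpa using linkWd_le_sum_basedWd_add_ldSigma (fun i => (W i).reverse) m Fin.revPerm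
  have hself : (∑ i, basedWd (W i)) + ∑ i, basedWd (W i).reverse = ∑ i, n i := by
    rw [← Finset.sum_add_distrib]
    exact Finset.sum_congr rfl fun i _ => basedWd_add_basedWd_reverse (hW i)
  have hlink := ldSigma_one_add_ldSigma_revPerm m
  unfold crossingNum
  omega

/-- `2 · d(|D|) ≤ c(D)`, where `d(|D|)` is the minimum of the warping
degree over all orientations of `D`. -/
theorem two_unoriented_wd_le_crossingNum (r : ℕ) (n : Fin r → ℕ)
    (W : ∀ i, List (Fin (n i) × Bool)) (m : Fin r → Fin r → ℕ)
    (hW : ∀ i, IsGaussWord (W i)) (hm : ∀ i, m i i = 0) :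
    2 * sInf {v | ∃ S : Finset (Fin r),
        v = linkWd (fun i => if i ∈ S then (W i).reverse else W i) m} ≤
      crossingNum n m :=
  two_unoriented_wd_le_crossingNum_general r n W m hW
end

section
/- Exchanging two adjacent components in the ordering changes the based linking warping degree as follows: let σ be a permutation of Fin r, let a and b be the components occupying positions k and k+1 in the ordering given by σ, and let σ' be the permutation obtained from σ by exchanging the positions of a and b. Then ld_{σ'} = ld_σ − m a b + m b a. -/
/-! Composing `σ` with the transposition of the adjacent positions `σ a ⋖ σ b` reverses the
relative order of `a` and `b` and of no other pair, because no position lies strictly between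
them. Hence the index set of the sum defining `ldSigma` loses `(a, b)` and gains `(b, a)`. -/

theorem Equiv.swap_lt_swap_iff_of_covBy {α : Type*} [LinearOrder α] [DecidableEq α]
    {i j x y : α} (hij : i ⋖ j) (hi : (x, y) ≠ (i, j)) (hj : (x, y) ≠ (j, i)) :
    swap i j x < swap i j y ↔ x < y := by
  have hlt := hij.lt
  have below : ∀ c < j, c ≤ i := fun _ => hij.le_of_lt
  have above : ∀ c, i < c → j ≤ c := fun _ => hij.ge_of_gt
  simp only [ne_eq, Prod.mk.injEq] at hi hj
  rw [swap_apply_def, swap_apply_def]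
  split_ifs <;> subst_vars <;> grind

open Finset in
theorem Equiv.Perm.filter_trans_swap_lt_eq_insert_erase {r : ℕ} (σ : Equiv.Perm (Fin r))
    {a b : Fin r} (hab : σ a ⋖ σ b) :
    univ.filter (fun p : Fin r × Fin r =>
        σ.trans (Equiv.swap (σ a) (σ b)) p.1 < σ.trans (Equiv.swap (σ a) (σ b)) p.2) =
      insert (b, a) ((univ.filter fun p : Fin r × Fin r => σ p.1 < σ p.2).erase (a, b)) := by
  have hne : a ≠ b := fun h => hab.lt.ne (congrArg σ h)
  ext ⟨x, y⟩
  simp only [mem_filter, mem_univ, true_and, mem_insert, mem_erase]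
  simp only [Equiv.trans_apply]
  by_cases hba : (x, y) = (b, a)
  · simp only [Prod.mk.injEq] at hba
    simp [hba, hab.lt]
  by_cases hab' : (x, y) = (a, b)
  · simp only [Prod.mk.injEq] at hab'
    simp [hab', hab.lt.not_gt, hne.symm]
  rw [Equiv.swap_lt_swap_iff_of_covBy hab]
  · simp [hba, hab']
  · simpa [σ.injective.eq_iff] using hab'
  · simpa [σ.injective.eq_iff] using hba

theorem ldSigma_trans_swap_add {r : ℕ} (m : Fin r → Fin r → ℕ) (σ : Equiv.Perm (Fin r))
    {a b : Fin r} (hab : σ a ⋖ σ b) :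
    ldSigma m (σ.trans (Equiv.swap (σ a) (σ b))) + m a b = ldSigma m σ + m b a := by
  set S := Finset.univ.filter (fun p : Fin r × Fin r => σ p.1 < σ p.2)
  have hab_mem : (a, b) ∈ S := by simp [S, hab.lt]
  have hba_not_mem : (b, a) ∉ S.erase (a, b) := by simp [S, hab.lt.not_gt]
  rw [ldSigma, ldSigma, σ.filter_trans_swap_lt_eq_insert_erase hab, Finset.sum_insert hba_not_mem,
    ← Finset.add_sum_erase S _ hab_mem]
  ring

theorem Fin.mk_covBy_mk_add_one {r k : ℕ} (hk : k + 1 < r) :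
    (⟨k, Nat.lt_of_succ_lt hk⟩ : Fin r) ⋖ ⟨k + 1, hk⟩ :=
  ⟨by simp [Fin.lt_def], fun c h₁ h₂ => by simp only [Fin.lt_def] at h₁ h₂; omega⟩

theorem ldSigma_swap_adjacent_general (r : ℕ) (m : Fin r → Fin r → ℕ)
    (σ : Equiv.Perm (Fin r))
    (k : ℕ) (hk : k + 1 < r) (a b : Fin r)
    (ha : σ a = ⟨k, Nat.lt_of_succ_lt hk⟩) (hb : σ b = ⟨k + 1, hk⟩) :
    (ldSigma m (σ.trans (Equiv.swap ⟨k, Nat.lt_of_succ_lt hk⟩ ⟨k + 1, hk⟩)) : ℤ) =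
      (ldSigma m σ : ℤ) - m a b + m b a := by
  have hab : σ a ⋖ σ b := ha ▸ hb ▸ Fin.mk_covBy_mk_add_one hk
  have h := ldSigma_trans_swap_add m σ hab
  rw [ha, hb] at h
  omega

/-- exchanging two adjacent components `a` (position `k`) and `b`
(position `k+1`) in the ordering changes the based linking warping degree by
`- m a b + m b a`. -/
theorem ldSigma_swap_adjacent (r : ℕ) (m : Fin r → Fin r → ℕ)
    (hm : ∀ i, m i i = 0) (σ : Equiv.Perm (Fin r))
    (k : ℕ) (hk : k + 1 < r) (a b : Fin r)
    (ha : σ a = ⟨k, Nat.lt_of_succ_lt hk⟩) (hb : σ b = ⟨k + 1, hk⟩) :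
    (ldSigma m (σ.trans (Equiv.swap ⟨k, Nat.lt_of_succ_lt hk⟩ ⟨k + 1, hk⟩)) : ℤ) =
      (ldSigma m σ : ℤ) - m a b + m b a :=
  ldSigma_swap_adjacent_general r m σ k hk a b ha hb
end
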